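/- arXiv:2009.11657 — 7 statements merged into one kernel-verified Lean document; each statement's English description precedes it below -/
import Mathlib

section
/- Let P ∈ ℂ[X] be a polynomial of degree ν ≥ 1 such that every root of P lies in the closed unit disk {|z| ≤ 1} and every root of P of modulus 1 is a simple root. Then there exist a positive definite Hermitian form q_e on ℂ^ν and a nonnegative Hermitian form q_d on ℂ^ν such that for every sequence v : ℕ → ℂ and every n ∈ ℕ, writing P = Σ_i c_i X^i, one has 2·Re( conj(Σ_{i=1}^{ν} i·c_i·v(n+i)) · (P(T)v)(n) ) = ν·|(P(T)v)(n)|² + q_e(v(n+1),…,v(n+ν)) − q_e(v(n),…,v(n+ν−1)) + q_d(v(n),…,v(n+ν−1)). In particular, for any sequence v : ℕ → ℂ satisfying (P(T)v)(n) = 0 for all n ∈ ℕ, the sequence n ↦ q_e(v(n),…,v(n+ν−1)) is nonincreasing. -/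
open Polynomial
open scoped ComplexOrder

/-- The action `(Q(T)v)(n) = Σ_i c_i v(n+i)` of a polynomial `Q = Σ_i c_i X^i`
on a sequence `v : ℕ → ℂ`, where `T` is the shift operator. -/
noncomputable def polyAct (Q : Polynomial ℂ) (v : ℕ → ℂ) (n : ℕ) : ℂ :=
  ∑ i ∈ Finset.range (Q.natDegree + 1), Q.coeff i * v (n + i)

/-- The Hermitian form `w ↦ Re (w* H w)` associated with a matrix `H`. -/
noncomputable def hermForm {ν : ℕ} (H : Matrix (Fin ν) (Fin ν) ℂ) (w : Fin ν → ℂ) : ℝ :=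
  (dotProduct (star w) (H.mulVec w)).re

/-!
Factor `P = c ∏ (X - r) ^ m_r`. The Jordan chains `g_{r,k} = P / (X - r) ^ k`, `1 ≤ k ≤ m_r`,
form a basis of the polynomials of degree `< ν`, so the coordinates `c_{r,k} = (g_{r,k}(T)v)(n)`
determine the window `(v(n), …, v(n+ν-1))`. Since `X g_{r,k} = g_{r,k-1} + r g_{r,k}` with
`g_{r,0} = P`, shifting the window acts on these coordinates as a Jordan block, except that
`c_{r,0} = (P(T)v)(n)` enters the first one. Take `q_e = Σ t_{r,k} |c_{r,k}|²` with geometrically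
decaying weights `t_{r,k} = m_r ρ_r ^ (k-1)`: by Young's inequality it does not increase under a
Jordan block with `|r| < 1`, nor under a `1 × 1` block with `|r| ≤ 1`, and `q_d` is the loss.
Finally `X P' = ν P + Σ_r m_r r g_{r,1}`, so with `t_{r,1} = m_r` the terms involving
`(P(T)v)(n)` add up to `2 Re(conj(T(P'(T)v)(n)) (P(T)v)(n)) - ν |(P(T)v)(n)|²`.
-/

open Finset
open scoped Matrix

section PolyAct

variable (v : ℕ → ℂ) (n : ℕ)

lemma polyAct_eq_sum (Q : ℂ[X]) : polyAct Q v n = Q.sum fun i c => c * v (n + i) :=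
  (sum_over_range Q (f := fun i c => c * v (n + i)) fun _ => zero_mul _).symm

lemma polyAct_eq_sum_range {Q : ℂ[X]} {N : ℕ} (hN : Q.natDegree < N) :
    polyAct Q v n = ∑ i ∈ range N, Q.coeff i * v (n + i) := by
  rw [polyAct_eq_sum, sum_over_range' Q (f := fun i c => c * v (n + i)) (fun _ => zero_mul _) N hN]

noncomputable def polyActLin : ℂ[X] →ₗ[ℂ] ℂ := lsum fun i => LinearMap.mulRight ℂ (v (n + i))

@[simp] lemma polyActLin_apply (Q : ℂ[X]) : polyActLin v n Q = polyAct Q v n := by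
  rw [polyActLin, lsum_apply, polyAct_eq_sum]
  rfl

lemma polyAct_X_mul (Q : ℂ[X]) : polyAct (X * Q) v n = polyAct Q v (n + 1) := by
  rw [polyAct_eq_sum_range v n (N := Q.natDegree + 2) (natDegree_mul_le.trans_lt (by simp; omega)),
    sum_range_succ', polyAct]
  simp only [coeff_X_mul, coeff_X_mul_zero, zero_mul, add_zero]
  exact sum_congr rfl fun i _ => by rw [add_assoc, add_comm 1 i]

lemma coeff_dotProduct_eq_polyAct {ν : ℕ} {Q : ℂ[X]} (hQ : Q.natDegree < ν) :
    (fun i : Fin ν => Q.coeff i) ⬝ᵥ (fun i : Fin ν => v (n + i)) = polyAct Q v n := by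
  rw [polyAct_eq_sum_range v n hQ, dotProduct,
    Fin.sum_univ_eq_sum_range (fun i => Q.coeff i * v (n + i))]

lemma coeff_X_mul_derivative (P : ℂ[X]) (i : ℕ) :
    (X * derivative P).coeff i = i * P.coeff i := by
  cases i with
  | zero => simp
  | succ i =>
    rw [coeff_X_mul, coeff_derivative, mul_comm]
    push_cast
    ring

lemma sum_Icc_mul_coeff_eq_polyAct_X_mul_derivative (P : ℂ[X]) :
    ∑ i ∈ Icc 1 P.natDegree, (i : ℂ) * P.coeff i * v (n + i) = polyAct (X * derivative P) v n := by
  have hdeg : (X * derivative P).natDegree < P.natDegree + 1 := by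
    refine Nat.lt_succ_of_le (natDegree_le_iff_coeff_eq_zero.2 fun N hN => ?_)
    rw [coeff_X_mul_derivative, coeff_eq_zero_of_natDegree_lt hN, mul_zero]
  rw [polyAct_eq_sum_range v n hdeg, ← sum_erase (range _) (a := 0) (by simp)]
  refine sum_congr (by ext i; simp; omega) fun i _ => ?_
  rw [coeff_X_mul_derivative]

end PolyAct

section WeightedGram

variable {n ι : Type*} [Fintype n]

noncomputable def weightedGram (s : Finset ι) (a : ι → ℝ) (u : ι → n → ℂ) : Matrix n n ℂ :=
  ∑ i ∈ s, a i • Matrix.vecMulVec (star (u i)) (u i)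

lemma isHermitian_weightedGram (s : Finset ι) (a : ι → ℝ) (u : ι → n → ℂ) :
    (weightedGram s a u).IsHermitian :=
  isSelfAdjoint_sum s fun i _ => .smul (.all (a i)) (Matrix.posSemidef_vecMulVec_star_self (u i)).1

lemma star_dotProduct_weightedGram_mulVec (s : Finset ι) (a : ι → ℝ) (u : ι → n → ℂ)
    (w : n → ℂ) :
    star w ⬝ᵥ (weightedGram s a u *ᵥ w)
      = ((∑ i ∈ s, a i * Complex.normSq (u i ⬝ᵥ w) : ℝ) : ℂ) := by
  simp only [weightedGram, Matrix.sum_mulVec, dotProduct_sum, Matrix.smul_mulVec, dotProduct_smul,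
    Matrix.vecMulVec_mulVec, Complex.ofReal_sum, Complex.ofReal_mul, Complex.real_smul]
  refine sum_congr rfl fun i _ => ?_
  rw [Complex.normSq_eq_conj_mul_self, op_smul_eq_mul, Matrix.star_dotProduct_star]
  simp only [RCLike.star_def]

lemma posDef_weightedGram {s : Finset ι} {a : ι → ℝ} {u : ι → n → ℂ} (ha : ∀ i ∈ s, 0 < a i)
    (hu : ∀ w, (∀ i ∈ s, u i ⬝ᵥ w = 0) → w = 0) : (weightedGram s a u).PosDef := by
  refine Matrix.posDef_iff_dotProduct_mulVec.2 ⟨isHermitian_weightedGram s a u, fun w hw => ?_⟩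
  obtain ⟨i, hi, hiw⟩ : ∃ i ∈ s, u i ⬝ᵥ w ≠ 0 := by
    by_contra! h
    exact hw (hu w h)
  rw [star_dotProduct_weightedGram_mulVec, Complex.zero_lt_real]
  exact sum_pos' (fun j hj => mul_nonneg (ha j hj).le (Complex.normSq_nonneg _))
    ⟨i, hi, mul_pos (ha i hi) (Complex.normSq_pos.2 hiw)⟩

lemma posSemidef_weightedGram_sub {ι' : Type*} {s : Finset ι} {a : ι → ℝ} {u : ι → n → ℂ}
    {s' : Finset ι'} {a' : ι' → ℝ} {u' : ι' → n → ℂ}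
    (h : ∀ w, ∑ i ∈ s', a' i * Complex.normSq (u' i ⬝ᵥ w)
      ≤ ∑ i ∈ s, a i * Complex.normSq (u i ⬝ᵥ w)) :
    (weightedGram s a u - weightedGram s' a' u').PosSemidef := by
  refine Matrix.posSemidef_iff_dotProduct_mulVec.2
    ⟨(isHermitian_weightedGram s a u).sub (isHermitian_weightedGram s' a' u'), fun w => ?_⟩
  rw [Matrix.sub_mulVec, dotProduct_sub, star_dotProduct_weightedGram_mulVec,
    star_dotProduct_weightedGram_mulVec, ← Complex.ofReal_sub, Complex.zero_le_real, sub_nonneg]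
  exact h w

lemma hermForm_weightedGram {ν : ℕ} (s : Finset ι) (a : ι → ℝ) (u : ι → Fin ν → ℂ)
    (w : Fin ν → ℂ) :
    hermForm (weightedGram s a u) w = ∑ i ∈ s, a i * Complex.normSq (u i ⬝ᵥ w) := by
  rw [hermForm, star_dotProduct_weightedGram_mulVec, Complex.ofReal_re]

end WeightedGram

lemma Matrix.PosSemidef.hermForm_nonneg {ν : ℕ} {H : Matrix (Fin ν) (Fin ν) ℂ}
    (hH : H.PosSemidef) (w : Fin ν → ℂ) : 0 ≤ hermForm H w :=
  (Complex.le_def.1 (hH.dotProduct_mulVec_nonneg w)).1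

lemma hermForm_sub {ν : ℕ} (A B : Matrix (Fin ν) (Fin ν) ℂ) (w : Fin ν → ℂ) :
    hermForm (A - B) w = hermForm A w - hermForm B w := by
  rw [hermForm, Matrix.sub_mulVec, dotProduct_sub, Complex.sub_re, hermForm, hermForm]

namespace Complex

lemma normSq_add_le_of_pos {s : ℝ} (hs : 0 < s) (x y : ℂ) :
    normSq (x + y) ≤ (1 + s⁻¹) * normSq x + (1 + s) * normSq y := by
  have hre : (x * (starRingEnd ℂ) y).re ≤ ‖x‖ * ‖y‖ :=
    (re_le_norm _).trans (by rw [norm_mul, norm_conj])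
  have hamgm : 2 * (‖x‖ * ‖y‖) ≤ s⁻¹ * ‖x‖ ^ 2 + s * ‖y‖ ^ 2 := by
    have h : s⁻¹ * ‖x‖ ^ 2 + s * ‖y‖ ^ 2 - 2 * (‖x‖ * ‖y‖) = s⁻¹ * (‖x‖ - s * ‖y‖) ^ 2 := by
      field_simp
      ring
    nlinarith [inv_pos.2 hs, sq_nonneg (‖x‖ - s * ‖y‖)]
  rw [normSq_add, ← Complex.sq_norm, ← Complex.sq_norm]
  linarith

lemma sum_mul_normSq_sub_normSq_sub {ι : Type*} (s : Finset ι) (m : ι → ℕ) (x : ι → ℂ) (L : ℂ) :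
    ∑ i ∈ s, (m i : ℝ) * (normSq (x i) - normSq (x i - L))
      = 2 * ((starRingEnd ℂ) (∑ i ∈ s, (m i : ℂ) * x i) * L).re
        - ((∑ i ∈ s, m i : ℕ) : ℝ) * normSq L := by
  simp only [normSq_sub, map_sum, sum_mul, re_sum, mul_sum, Nat.cast_sum, ← sum_sub_distrib]
  refine sum_congr rfl fun i _ => ?_
  simp only [map_mul, map_natCast, mul_re, mul_im, natCast_re, natCast_im, conj_re, conj_im]
  ring

end Complex

section JordanBlock

/-- With `e = 1 - |r|²`, any ratio `ρ ≤ e² / (2 (e + 2))` gives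
`(1 + 2/e) ρ + (1 + e/2) |r|² ≤ 1`. -/
noncomputable def blockRatio (r : ℂ) : ℝ := (1 - Complex.normSq r) ^ 2 / 6

noncomputable def blockWeight (m : ℕ) (r : ℂ) (k : ℕ) : ℝ := m * blockRatio r ^ k

lemma blockWeight_nonneg {m : ℕ} {r : ℂ} (k : ℕ) : 0 ≤ blockWeight m r k := by
  unfold blockWeight blockRatio
  positivity

lemma blockWeight_pos {m k : ℕ} {r : ℂ} (hm : 0 < m) (hr : Complex.normSq r ≠ 1 ∨ k = 0) :
    0 < blockWeight m r k := by
  rcases hr with hr | rfl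
  · have : 0 < blockRatio r :=
      div_pos (sq_pos_of_ne_zero (sub_ne_zero.2 (Ne.symm hr))) (by norm_num)
    unfold blockWeight
    positivity
  · simpa [blockWeight] using hm

lemma sum_blockWeight_mul_normSq_le_blockRatio_mul {m : ℕ} {r : ℂ} (c : ℕ → ℂ) (hc : c 0 = 0) :
    ∑ k ∈ range m, blockWeight m r k * Complex.normSq (c k)
      ≤ blockRatio r * ∑ k ∈ range m, blockWeight m r k * Complex.normSq (c (k + 1)) := by
  have ht : ∀ k, 0 ≤ blockWeight m r k := blockWeight_nonneg
  calc ∑ k ∈ range m, blockWeight m r k * Complex.normSq (c k)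
      ≤ ∑ k ∈ range (m + 1), blockWeight m r k * Complex.normSq (c k) :=
        sum_le_sum_of_subset_of_nonneg (range_subset_range.2 (Nat.le_succ m))
          fun k _ _ => mul_nonneg (ht k) (Complex.normSq_nonneg _)
    _ = _ := by
        rw [sum_range_succ', hc, Complex.normSq_zero, mul_zero, add_zero, mul_sum]
        refine sum_congr rfl fun k _ => ?_
        simp only [blockWeight, pow_succ]
        ring

theorem sum_blockWeight_mul_normSq_le {m : ℕ} {r : ℂ} (hr : Complex.normSq r ≤ 1)
    (hm : 2 ≤ m → Complex.normSq r < 1) (c : ℕ → ℂ) (hc : c 0 = 0) :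
    ∑ k ∈ range m, blockWeight m r k * Complex.normSq (c k + r * c (k + 1))
      ≤ ∑ k ∈ range m, blockWeight m r k * Complex.normSq (c (k + 1)) := by
  rcases Nat.lt_or_ge m 2 with hm1 | hm2
  · interval_cases m
    · simp
    · simp only [range_one, sum_singleton, hc, zero_add, Complex.normSq_mul]
      exact mul_le_mul_of_nonneg_left (mul_le_of_le_one_left (Complex.normSq_nonneg _) hr)
        (by simp [blockWeight])
  set e := 1 - Complex.normSq r with he_def
  have he : 0 < e := by linarith [hm hm2]
  have ht : ∀ k, 0 ≤ blockWeight m r k := blockWeight_nonneg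
  set S := ∑ k ∈ range m, blockWeight m r k * Complex.normSq (c (k + 1))
  have hS : 0 ≤ S := sum_nonneg fun k _ => mul_nonneg (ht k) (Complex.normSq_nonneg _)
  have hterm : ∀ k ∈ range m, blockWeight m r k * Complex.normSq (c k + r * c (k + 1))
      ≤ (1 + (e / 2)⁻¹) * (blockWeight m r k * Complex.normSq (c k))
        + (1 + e / 2) * Complex.normSq r * (blockWeight m r k * Complex.normSq (c (k + 1))) := by
    intro k _
    have := mul_le_mul_of_nonneg_left
      (Complex.normSq_add_le_of_pos (half_pos he) (c k) (r * c (k + 1))) (ht k)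
    rw [Complex.normSq_mul] at this
    linarith
  calc _ ≤ _ := sum_le_sum hterm
    _ = (1 + (e / 2)⁻¹) * ∑ k ∈ range m, blockWeight m r k * Complex.normSq (c k)
        + (1 + e / 2) * Complex.normSq r * S := by rw [sum_add_distrib, ← mul_sum, ← mul_sum]
    _ ≤ (1 + (e / 2)⁻¹) * (blockRatio r * S) + (1 + e / 2) * Complex.normSq r * S := by
        gcongr
        exact sum_blockWeight_mul_normSq_le_blockRatio_mul c hc
    _ = (1 - e / 6 - e ^ 2 / 3) * S := by
        rw [blockRatio, ← he_def, show Complex.normSq r = 1 - e by ring]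
        field_simp
        ring
    _ ≤ S := by nlinarith

end JordanBlock

namespace Polynomial

variable {K : Type*} [Field K] {P : K[X]} {r : K} {k : ℕ}

lemma mul_divByMonic_eq_of_dvd {R : Type*} [Ring R] {p q : R[X]} (hq : q.Monic) (h : q ∣ p) :
    q * (p /ₘ q) = p := by
  simpa [(modByMonic_eq_zero_iff_dvd hq).2 h] using modByMonic_add_div p q

lemma divByMonic_pow_eq_pow_mul (hk : k ≤ P.rootMultiplicity r) :
    P /ₘ (X - C r) ^ k
      = (X - C r) ^ (P.rootMultiplicity r - k) * (P /ₘ (X - C r) ^ P.rootMultiplicity r) := by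
  refine mul_left_cancel₀ (pow_ne_zero k (X_sub_C_ne_zero r)) ?_
  rw [mul_divByMonic_eq_of_dvd ((monic_X_sub_C r).pow k)
      ((pow_dvd_pow _ hk).trans (pow_rootMultiplicity_dvd P r)),
    ← mul_assoc, ← pow_add, Nat.add_sub_cancel' hk, pow_mul_divByMonic_rootMultiplicity_eq]

lemma X_mul_divByMonic_pow_succ (hk : k + 1 ≤ P.rootMultiplicity r) :
    X * (P /ₘ (X - C r) ^ (k + 1)) = P /ₘ (X - C r) ^ k + C r * (P /ₘ (X - C r) ^ (k + 1)) := by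
  have h : P /ₘ (X - C r) ^ k = (X - C r) * (P /ₘ (X - C r) ^ (k + 1)) := by
    rw [divByMonic_pow_eq_pow_mul hk, divByMonic_pow_eq_pow_mul (by omega : k ≤ _),
      show P.rootMultiplicity r - k = P.rootMultiplicity r - (k + 1) + 1 by omega, pow_succ]
    ring
  rw [h]
  ring

lemma eq_zero_of_pow_dvd_sum_smul_X_sub_C_pow {m : ℕ} {b : ℕ → K}
    (h : (X - C r) ^ m ∣ ∑ j ∈ range m, b j • (X - C r) ^ j) {j : ℕ} (hj : j < m) : b j = 0 := by
  obtain ⟨q, hq⟩ := h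
  have := congr_arg (fun f => (taylor r f).coeff j) hq
  simpa [taylor_mul, taylor_pow, taylor_X, coeff_X_pow_mul', hj, not_le.2 hj] using this

variable [DecidableEq K]

lemma divByMonic_X_sub_C_eq_prod_erase (hP : P.Splits) (hr : r ∈ P.roots) :
    P /ₘ (X - C r) = C P.leadingCoeff * ((P.roots.erase r).map fun a => X - C a).prod := by
  conv_lhs => rw [hP.eq_prod_roots, ← Multiset.prod_map_erase hr, mul_left_comm]
  exact mul_divByMonic_cancel_left _ (monic_X_sub_C r)

lemma derivative_eq_sum_rootMultiplicity_smul (hP : P.Splits) :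
    derivative P = ∑ r ∈ P.roots.toFinset, P.rootMultiplicity r • (P /ₘ (X - C r)) := by
  conv_lhs => rw [hP.eq_prod_roots]
  simp_rw [derivative_C_mul, derivative_prod, derivative_X_sub_C, mul_one,
    ← Multiset.sum_map_mul_left]
  rw [Multiset.map_congr rfl fun r hr => (divByMonic_X_sub_C_eq_prod_erase hP hr).symm,
    sum_multiset_map_count]
  simp_rw [count_roots]

lemma sum_rootMultiplicity_eq_natDegree (hP : P.Splits) :
    ∑ r ∈ P.roots.toFinset, P.rootMultiplicity r = P.natDegree := by
  simp_rw [← count_roots, Multiset.toFinset_sum_count_eq, hP.natDegree_eq_card_roots]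

lemma rootMultiplicity_pos_of_mem_toFinset_roots (hr : r ∈ P.roots.toFinset) :
    0 < P.rootMultiplicity r :=
  count_roots (a := r) P ▸ Multiset.count_pos.2 (Multiset.mem_toFinset.1 hr)

variable (P) in
noncomputable def chainIndex : Finset (Σ _ : K, ℕ) :=
  P.roots.toFinset.sigma fun r => range (P.rootMultiplicity r)

variable (P) in
noncomputable def chainPoly (p : Σ _ : K, ℕ) : K[X] := P /ₘ (X - C p.1) ^ (p.2 + 1)

lemma card_chainIndex (hP : P.Splits) : (chainIndex P).card = P.natDegree := by
  simp [chainIndex, sum_rootMultiplicity_eq_natDegree hP]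

lemma natDegree_chainPoly_lt {p : Σ _ : K, ℕ} (hp : p ∈ chainIndex P) :
    (chainPoly P p).natDegree < P.natDegree := by
  obtain ⟨hr, hk⟩ := mem_sigma.1 hp
  have hdeg : 0 < P.natDegree :=
    (Multiset.card_pos_iff_exists_mem.2 ⟨p.1, Multiset.mem_toFinset.1 hr⟩).trans_le (card_roots' P)
  rw [chainPoly, natDegree_divByMonic _ ((monic_X_sub_C _).pow _), natDegree_pow,
    natDegree_X_sub_C]
  omega

lemma pow_rootMultiplicity_dvd_chainPoly {r₀ : K} {p : Σ _ : K, ℕ} (hp : p ∈ chainIndex P)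
    (hne : p.1 ≠ r₀) : (X - C r₀) ^ P.rootMultiplicity r₀ ∣ chainPoly P p := by
  have hcop : IsCoprime ((X - C r₀) ^ P.rootMultiplicity r₀) ((X - C p.1) ^ (p.2 + 1)) :=
    (isCoprime_X_sub_C_of_isUnit_sub (sub_ne_zero.2 hne.symm).isUnit).pow
  refine hcop.dvd_of_dvd_mul_left ?_
  rw [chainPoly, mul_divByMonic_eq_of_dvd ((monic_X_sub_C _).pow _)
    ((pow_dvd_pow _ (mem_range.1 (mem_sigma.1 hp).2)).trans (pow_rootMultiplicity_dvd P _))]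
  exact pow_rootMultiplicity_dvd P r₀

lemma eq_zero_of_sum_smul_chainPoly_eq_zero (hP : P ≠ 0) {a : (Σ _ : K, ℕ) → K}
    (h : ∑ p ∈ chainIndex P, a p • chainPoly P p = 0) {p : Σ _ : K, ℕ} (hp : p ∈ chainIndex P) :
    a p = 0 := by
  obtain ⟨r₀, k₀⟩ := p
  obtain ⟨hr₀, hk₀⟩ := mem_sigma.1 hp
  set m := P.rootMultiplicity r₀
  have hk₀ : k₀ < m := mem_range.1 hk₀
  -- the chain of `r₀` is `(X - r₀) ^ j * Q` (`j < m`) with `Q(r₀) ≠ 0`, while `(X - r₀) ^ m`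
  -- divides the chains of the other roots
  set s := ∑ j ∈ range m, a ⟨r₀, m - 1 - j⟩ • (X - C r₀) ^ j
  have hblock : ∑ k ∈ range m, a ⟨r₀, k⟩ • chainPoly P ⟨r₀, k⟩ = s * (P /ₘ (X - C r₀) ^ m) := by
    rw [← sum_range_reflect, sum_mul]
    refine sum_congr rfl fun j hj => ?_
    have hj := mem_range.1 hj
    rw [chainPoly, divByMonic_pow_eq_pow_mul (r := r₀) (k := m - 1 - j + 1) (by omega),
      smul_mul_assoc, show m - (m - 1 - j + 1) = j by omega]
  have hrest : (X - C r₀) ^ m ∣ ∑ r ∈ P.roots.toFinset.erase r₀,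
      ∑ k ∈ range (P.rootMultiplicity r), a ⟨r, k⟩ • chainPoly P ⟨r, k⟩ := by
    refine dvd_sum fun r hr => dvd_sum fun k hk => ?_
    have hp : (⟨r, k⟩ : Σ _ : K, ℕ) ∈ chainIndex P := mem_sigma.2 ⟨mem_of_mem_erase hr, hk⟩
    rw [smul_eq_C_mul]
    exact (pow_rootMultiplicity_dvd_chainPoly hp (ne_of_mem_erase hr)).mul_left _
  rw [chainIndex, sum_sigma, ← add_sum_erase _ _ hr₀, hblock] at h
  have hQ : IsCoprime ((X - C r₀) ^ m) (P /ₘ (X - C r₀) ^ m) := by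
    refine IsCoprime.pow_left ((irreducible_X_sub_C r₀).coprime_iff_not_dvd.2 ?_)
    rw [dvd_iff_isRoot]
    exact eval_divByMonic_pow_rootMultiplicity_ne_zero r₀ hP
  have hs : (X - C r₀) ^ m ∣ s := by
    refine hQ.dvd_of_dvd_mul_right ?_
    rw [eq_neg_of_add_eq_zero_left h]
    exact hrest.neg_right
  simpa [show m - 1 - (m - 1 - k₀) = k₀ by omega] using
    eq_zero_of_pow_dvd_sum_smul_X_sub_C_pow hs (j := m - 1 - k₀) (by omega)

lemma linearIndependent_chainPoly (hP : P ≠ 0) :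
    LinearIndependent K fun p : chainIndex P => chainPoly P p := by
  refine Fintype.linearIndependent_iff.2 fun g hg i => ?_
  let a : (Σ _ : K, ℕ) → K := fun p => if hp : p ∈ chainIndex P then g ⟨p, hp⟩ else 0
  have ha : ∑ p ∈ chainIndex P, a p • chainPoly P p = 0 := by
    rw [← hg, ← sum_coe_sort (chainIndex P)]
    exact sum_congr rfl fun p _ => by simp [a, p.2]
  simpa [a, i.2] using eq_zero_of_sum_smul_chainPoly_eq_zero hP ha i.2

lemma span_chainPoly (hP : P ≠ 0) (hs : P.Splits) :
    Submodule.span K (Set.range fun p : chainIndex P => chainPoly P p)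
      = degreeLT K P.natDegree := by
  have := (degreeLTEquiv K P.natDegree).symm.finiteDimensional
  refine Submodule.eq_of_le_of_finrank_eq (Submodule.span_le.2 ?_) ?_
  · rintro _ ⟨p, rfl⟩
    exact mem_degreeLT.2
      (degree_le_natDegree.trans_lt (by exact_mod_cast natDegree_chainPoly_lt p.2))
  · rw [finrank_span_eq_card (linearIndependent_chainPoly hP), Fintype.card_coe,
      card_chainIndex hs, (degreeLTEquiv K P.natDegree).finrank_eq, Module.finrank_fin_fun]

lemma eq_zero_of_forall_chainPoly_coeff_dotProduct_eq_zero (hP : P ≠ 0) (hs : P.Splits)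
    {w : Fin P.natDegree → K}
    (h : ∀ p ∈ chainIndex P, (fun i : Fin P.natDegree => (chainPoly P p).coeff i) ⬝ᵥ w = 0) :
    w = 0 := by
  let φ : K[X] →ₗ[K] K := ∑ i : Fin P.natDegree, w i • lcoeff K i
  have hφ : ∀ q, φ q = (fun i : Fin P.natDegree => q.coeff i) ⬝ᵥ w := fun q => by
    simp [φ, dotProduct, mul_comm]
  have hker : degreeLT K P.natDegree ≤ LinearMap.ker φ := by
    rw [← span_chainPoly hP hs, Submodule.span_le]
    rintro _ ⟨p, rfl⟩
    exact (hφ _).trans (h p p.2)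
  funext j
  have hj : φ (X ^ (j : ℕ)) = 0 := hker (mem_degreeLT.2 (by simp))
  simpa [hφ, coeff_X_pow, dotProduct, Fin.val_inj] using hj

end Polynomial

section Energy

variable (P : ℂ[X])

/-- Index `0` stands for `P` itself, whose coordinate `(P(T)v)(n)` vanishes along solutions of
`P(T)v = 0`; taking it to be `0` makes `shiftedEnergyMatrix` the energy of the next window of
a solution. -/
noncomputable def chainVec (r : ℂ) : ℕ → Fin P.natDegree → ℂ
  | 0 => 0
  | k + 1 => fun i => (chainPoly P ⟨r, k⟩).coeff i

noncomputable def chainWeight (p : Σ _ : ℂ, ℕ) : ℝ :=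
  blockWeight (P.rootMultiplicity p.1) p.1 p.2

noncomputable def energyMatrix : Matrix (Fin P.natDegree) (Fin P.natDegree) ℂ :=
  weightedGram (chainIndex P) (chainWeight P) fun p => chainVec P p.1 (p.2 + 1)

noncomputable def shiftedEnergyMatrix : Matrix (Fin P.natDegree) (Fin P.natDegree) ℂ :=
  weightedGram (chainIndex P) (chainWeight P) fun p =>
    chainVec P p.1 p.2 + p.1 • chainVec P p.1 (p.2 + 1)

variable {P}

lemma ne_zero_of_forall_eval_eq_zero_norm_le_one (hroots : ∀ z : ℂ, P.eval z = 0 → ‖z‖ ≤ 1) :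
    P ≠ 0 := by
  rintro rfl
  have := hroots 2 eval_zero
  norm_num at this

lemma normSq_le_one_of_mem_roots (hroots : ∀ z : ℂ, P.eval z = 0 → ‖z‖ ≤ 1) {r : ℂ}
    (hr : r ∈ P.roots) : Complex.normSq r ≤ 1 := by
  rw [← Complex.sq_norm]
  exact pow_le_one₀ (norm_nonneg r) (hroots r (mem_roots'.1 hr).2)

lemma normSq_lt_one_of_one_lt_rootMultiplicity (hroots : ∀ z : ℂ, P.eval z = 0 → ‖z‖ ≤ 1)
    (hsimple : ∀ z : ℂ, P.eval z = 0 → ‖z‖ = 1 → P.derivative.eval z ≠ 0) {r : ℂ}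
    (hr : 1 < P.rootMultiplicity r) : Complex.normSq r < 1 := by
  obtain ⟨hP, hP'⟩ := (one_lt_rootMultiplicity_iff_isRoot
    (ne_zero_of_forall_eval_eq_zero_norm_le_one hroots)).1 hr
  rw [← Complex.sq_norm]
  exact pow_lt_one₀ (norm_nonneg r) ((hroots r hP).lt_of_ne fun h => hsimple r hP h hP')
    two_ne_zero

lemma chainWeight_pos (hroots : ∀ z : ℂ, P.eval z = 0 → ‖z‖ ≤ 1)
    (hsimple : ∀ z : ℂ, P.eval z = 0 → ‖z‖ = 1 → P.derivative.eval z ≠ 0)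
    {p : Σ _ : ℂ, ℕ} (hp : p ∈ chainIndex P) : 0 < chainWeight P p := by
  have hk : p.2 < P.rootMultiplicity p.1 := mem_range.1 (mem_sigma.1 hp).2
  refine blockWeight_pos (by omega) ?_
  rcases Nat.eq_zero_or_pos p.2 with h0 | hpos
  · exact Or.inr h0
  · exact Or.inl (normSq_lt_one_of_one_lt_rootMultiplicity hroots hsimple (by omega)).ne

lemma posDef_energyMatrix (hroots : ∀ z : ℂ, P.eval z = 0 → ‖z‖ ≤ 1)
    (hsimple : ∀ z : ℂ, P.eval z = 0 → ‖z‖ = 1 → P.derivative.eval z ≠ 0) :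
    (energyMatrix P).PosDef :=
  posDef_weightedGram (fun _ hp => chainWeight_pos hroots hsimple hp) fun _ hw =>
    eq_zero_of_forall_chainPoly_coeff_dotProduct_eq_zero
      (ne_zero_of_forall_eval_eq_zero_norm_le_one hroots) (IsAlgClosed.splits P) hw

lemma posSemidef_energyMatrix_sub_shiftedEnergyMatrix
    (hroots : ∀ z : ℂ, P.eval z = 0 → ‖z‖ ≤ 1)
    (hsimple : ∀ z : ℂ, P.eval z = 0 → ‖z‖ = 1 → P.derivative.eval z ≠ 0) :
    (energyMatrix P - shiftedEnergyMatrix P).PosSemidef := by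
  refine posSemidef_weightedGram_sub fun w => ?_
  rw [chainIndex, sum_sigma, sum_sigma]
  refine sum_le_sum fun r hr => ?_
  simpa [chainWeight, add_dotProduct, smul_dotProduct] using
    sum_blockWeight_mul_normSq_le (normSq_le_one_of_mem_roots hroots (Multiset.mem_toFinset.1 hr))
      (fun h => normSq_lt_one_of_one_lt_rootMultiplicity hroots hsimple h)
      (fun k => chainVec P r k ⬝ᵥ w) (zero_dotProduct w)

section Balance

variable (v : ℕ → ℂ) (n : ℕ)

lemma chainVec_succ_dotProduct {r : ℂ} {k : ℕ} (hp : ⟨r, k⟩ ∈ chainIndex P) :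
    chainVec P r (k + 1) ⬝ᵥ (fun i : Fin P.natDegree => v (n + i))
      = polyAct (chainPoly P ⟨r, k⟩) v n :=
  coeff_dotProduct_eq_polyAct v n (natDegree_chainPoly_lt hp)

lemma chainVec_succ_dotProduct_shift {r : ℂ} {k : ℕ} (hp : ⟨r, k⟩ ∈ chainIndex P) :
    chainVec P r (k + 1) ⬝ᵥ (fun i : Fin P.natDegree => v (n + 1 + i))
      = polyAct (P /ₘ (X - C r) ^ k) v n + r * polyAct (chainPoly P ⟨r, k⟩) v n := by
  rw [chainVec_succ_dotProduct v (n + 1) hp, ← polyAct_X_mul, chainPoly,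
    X_mul_divByMonic_pow_succ (mem_range.1 (mem_sigma.1 hp).2), ← polyActLin_apply, map_add,
    ← smul_eq_C_mul, map_smul, polyActLin_apply, polyActLin_apply, smul_eq_mul]

lemma polyAct_X_mul_derivative_eq_sum_roots :
    polyAct (X * derivative P) v n = ∑ r ∈ P.roots.toFinset, (P.rootMultiplicity r : ℂ)
      * (polyAct P v n + r * polyAct (chainPoly P ⟨r, 0⟩) v n) := by
  rw [derivative_eq_sum_rootMultiplicity_smul (IsAlgClosed.splits P), mul_sum,
    ← polyActLin_apply, map_sum]
  refine sum_congr rfl fun r hr => ?_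
  have hX := X_mul_divByMonic_pow_succ (P := P) (r := r) (k := 0)
    (rootMultiplicity_pos_of_mem_toFinset_roots hr)
  rw [zero_add, pow_one, pow_zero, divByMonic_one] at hX
  rw [mul_smul_comm, map_nsmul, hX, map_add, ← smul_eq_C_mul, map_smul, nsmul_eq_mul,
    polyActLin_apply, polyActLin_apply, smul_eq_mul, chainPoly, zero_add, pow_one]

lemma sum_chainWeight_mul_normSq_sub {r : ℂ} (hr : r ∈ P.roots.toFinset) :
    ∑ k ∈ range (P.rootMultiplicity r),
      (chainWeight P ⟨r, k⟩ * Complex.normSq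
          (chainVec P r (k + 1) ⬝ᵥ (fun i : Fin P.natDegree => v (n + 1 + i)))
        - chainWeight P ⟨r, k⟩ * Complex.normSq
          ((chainVec P r k + r • chainVec P r (k + 1)) ⬝ᵥ (fun i : Fin P.natDegree => v (n + i))))
      = P.rootMultiplicity r
        * (Complex.normSq (polyAct P v n + r * polyAct (chainPoly P ⟨r, 0⟩) v n)
          - Complex.normSq (polyAct P v n + r * polyAct (chainPoly P ⟨r, 0⟩) v n
            - polyAct P v n)) := by
  obtain ⟨m, hm⟩ :=
    Nat.exists_eq_add_one_of_ne_zero (rootMultiplicity_pos_of_mem_toFinset_roots hr).ne'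
  have hmem : ∀ k ≤ m, (⟨r, k⟩ : Σ _ : ℂ, ℕ) ∈ chainIndex P := fun k hk =>
    mem_sigma.2 ⟨hr, mem_range.2 (show k < P.rootMultiplicity r by omega)⟩
  rw [hm, sum_range_succ', sum_eq_zero fun k hk => ?_, zero_add]
  · simp only [chainVec_succ_dotProduct_shift v n (hmem 0 (Nat.zero_le _)), add_dotProduct,
      smul_dotProduct, chainVec_succ_dotProduct v n (hmem 0 (Nat.zero_le _)), smul_eq_mul]
    rw [pow_zero, divByMonic_one, chainVec, zero_dotProduct, zero_add, add_sub_cancel_left,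
      ← mul_sub, chainWeight, blockWeight, hm, pow_zero, mul_one]
  · have hk := mem_range.1 hk
    rw [chainVec_succ_dotProduct_shift v n (hmem (k + 1) hk), add_dotProduct, smul_dotProduct,
      chainVec_succ_dotProduct v n (hmem k hk.le), chainVec_succ_dotProduct v n (hmem (k + 1) hk),
      smul_eq_mul]
    exact sub_self _

theorem energy_balance :
    hermForm (energyMatrix P) (fun i => v (n + 1 + i))
        - hermForm (shiftedEnergyMatrix P) (fun i => v (n + i))
      = 2 * ((starRingEnd ℂ) (polyAct (X * derivative P) v n) * polyAct P v n).re
        - P.natDegree * Complex.normSq (polyAct P v n) := by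
  rw [energyMatrix, shiftedEnergyMatrix, hermForm_weightedGram, hermForm_weightedGram,
    ← sum_sub_distrib, chainIndex, sum_sigma,
    sum_congr rfl fun r hr => sum_chainWeight_mul_normSq_sub v n hr,
    Complex.sum_mul_normSq_sub_normSq_sub, polyAct_X_mul_derivative_eq_sum_roots,
    sum_rootMultiplicity_eq_natDegree (IsAlgClosed.splits P)]

end Balance

end Energy

theorem stmt_0_general (ν : ℕ) (P : Polynomial ℂ) (hdeg : P.natDegree = ν)
    (hroots : ∀ z : ℂ, P.eval z = 0 → ‖z‖ ≤ 1)
    (hsimple : ∀ z : ℂ, P.eval z = 0 → ‖z‖ = 1 → P.derivative.eval z ≠ 0) :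
    ∃ He Hd : Matrix (Fin ν) (Fin ν) ℂ, He.PosDef ∧ Hd.PosSemidef ∧
      (∀ (v : ℕ → ℂ) (n : ℕ),
        2 * ((starRingEnd ℂ) (∑ i ∈ Finset.Icc 1 ν, (i : ℂ) * P.coeff i * v (n + i))
              * polyAct P v n).re
          = (ν : ℝ) * ‖polyAct P v n‖ ^ 2
            + hermForm He (fun i : Fin ν => v (n + 1 + i))
            - hermForm He (fun i : Fin ν => v (n + i))
            + hermForm Hd (fun i : Fin ν => v (n + i)))
      ∧ (∀ v : ℕ → ℂ, (∀ n : ℕ, polyAct P v n = 0) →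
          ∀ n : ℕ, hermForm He (fun i : Fin ν => v (n + 1 + i))
            ≤ hermForm He (fun i : Fin ν => v (n + i))) := by
  subst hdeg
  have hdiss := posSemidef_energyMatrix_sub_shiftedEnergyMatrix hroots hsimple
  refine ⟨energyMatrix P, energyMatrix P - shiftedEnergyMatrix P,
    posDef_energyMatrix hroots hsimple, hdiss, fun v n => ?_, fun v hv n => ?_⟩
  · rw [sum_Icc_mul_coeff_eq_polyAct_X_mul_derivative, hermForm_sub, Complex.sq_norm]
    linarith [energy_balance v n (P := P)]
  · have hbalance := energy_balance v n (P := P)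
    have hloss := hdiss.hermForm_nonneg (fun i => v (n + i))
    rw [hv n, mul_zero, Complex.zero_re, Complex.normSq_zero, mul_zero, mul_zero, sub_zero]
      at hbalance
    rw [hermForm_sub] at hloss
    linarith

/-- Lemma 1: the energy-dissipation balance law for recurrence
relations. If all roots of `P` lie in the closed unit disk and those of modulus `1`
are simple, there are a positive definite Hermitian form `q_e` and a nonnegative
Hermitian form `q_d` on `ℂ^ν` such that
`2 Re( conj(T(P'(T)v)(n)) · (P(T)v)(n) ) = ν |(P(T)v)(n)|²
  + q_e(v(n+1),…,v(n+ν)) − q_e(v(n),…,v(n+ν−1)) + q_d(v(n),…,v(n+ν−1))`;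
in particular `n ↦ q_e(v(n),…,v(n+ν−1))` is nonincreasing along any solution
of `P(T)v = 0`. -/
theorem stmt_0 (ν : ℕ) (hν : 1 ≤ ν) (P : Polynomial ℂ) (hdeg : P.natDegree = ν)
    (hroots : ∀ z : ℂ, P.eval z = 0 → ‖z‖ ≤ 1)
    (hsimple : ∀ z : ℂ, P.eval z = 0 → ‖z‖ = 1 → P.derivative.eval z ≠ 0) :
    ∃ He Hd : Matrix (Fin ν) (Fin ν) ℂ, He.PosDef ∧ Hd.PosSemidef ∧
      (∀ (v : ℕ → ℂ) (n : ℕ),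
        2 * ((starRingEnd ℂ) (∑ i ∈ Finset.Icc 1 ν, (i : ℂ) * P.coeff i * v (n + i))
              * polyAct P v n).re
          = (ν : ℝ) * ‖polyAct P v n‖ ^ 2
            + hermForm He (fun i : Fin ν => v (n + 1 + i))
            - hermForm He (fun i : Fin ν => v (n + i))
            + hermForm Hd (fun i : Fin ν => v (n + i)))
      ∧ (∀ v : ℕ → ℂ, (∀ n : ℕ, polyAct P v n = 0) →
          ∀ n : ℕ, hermForm He (fun i : Fin ν => v (n + 1 + i))
            ≤ hermForm He (fun i : Fin ν => v (n + i))) :=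
  stmt_0_general ν P hdeg hroots hsimple
end

section
/- Let ν ≥ 1, let a ∈ ℂ \ {0}, let z₁,…,z_m ∈ ℂ be pairwise distinct with |z_k| < 1 whenever μ_k ≥ 2, let μ₁,…,μ_m ≥ 1 be integers with μ₁+⋯+μ_m = ν, and let ε > 0. Set P_k := a·(X−z_k)^{μ_k−1}·∏_{j≠k}(X−z_j)^{μ_j} and, for 1 ≤ j ≤ μ_k−1, Q_{k,j} := a·(X−z_k)^{j−1}·∏_{ℓ≠k}(X−z_ℓ)^{μ_ℓ}. Then the Hermitian form q_e on ℂ^ν defined by q_e(w⁰,…,w^{ν−1}) := Σ_{k=1}^m μ_k·|P_k(T)w⁰|² + Σ_{k=1}^m Σ_{j=1}^{μ_k−1} ε^{μ_k−j}·(1−|z_k|²)^{2(μ_k−j)}·|Q_{k,j}(T)w⁰|² is positive definite. -/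
open Polynomial

/-- `P_k = a (X − z_k)^{μ_k−1} ∏_{j≠k} (X − z_j)^{μ_j}`. -/
noncomputable def Pkpoly (m : ℕ) (a : ℂ) (z : Fin m → ℂ) (μ : Fin m → ℕ) (k : Fin m) :
    Polynomial ℂ :=
  C a * (X - C (z k)) ^ (μ k - 1) * ∏ j ∈ Finset.univ.erase k, (X - C (z j)) ^ (μ j)

/-- `Q_{k,j} = a (X − z_k)^{j−1} ∏_{ℓ≠k} (X − z_ℓ)^{μ_ℓ}`. -/
noncomputable def Qkjpoly (m : ℕ) (a : ℂ) (z : Fin m → ℂ) (μ : Fin m → ℕ) (k : Fin m)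
    (j : ℕ) : Polynomial ℂ :=
  C a * (X - C (z k)) ^ (j - 1) * ∏ l ∈ Finset.univ.erase k, (X - C (z l)) ^ (μ l)

/-- The action `R(T)w⁰ = Σ_i r_i w^i` of a polynomial `R = Σ_i r_i X^i` of degree
`≤ ν−1` on a vector `(w⁰,…,w^{ν−1}) ∈ ℂ^ν`. -/
noncomputable def polyActV (ν : ℕ) (R : Polynomial ℂ) (w : Fin ν → ℂ) : ℂ :=
  ∑ i : Fin ν, R.coeff i * w i

/-!
Up to the factor `a`, the polynomials `P_k` and `Q_{k,j+1}` run through the family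
`B_{k,j} = (X − z_k)^j ∏_{l≠k} (X − z_l)^{μ_l}`, `0 ≤ j < μ_k`, each with a positive weight
(for `j < μ_k − 1` because `|z_k| < 1`). Dividing by `∏_l (X − z_l)^{μ_l}` turns `B_{k,j}` into
the partial fraction `(X − z_k)^{j − μ_k}`, so uniqueness of partial fraction decompositions
makes the `ν` polynomials `B_{k,j}` linearly independent, hence a basis of the polynomials of
degree `< ν`. The functional `R ↦ R(T)w⁰` therefore vanishes on some `B_{k,j}` unless it
vanishes on every `X^i`, i.e. unless `w = 0`.
-/

namespace Polynomial

section PartialFractions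

variable {K ι : Type*} [Field K] [Fintype ι] [DecidableEq ι] (z : ι → K) (μ : ι → ℕ)

noncomputable def cofactor (k : ι) : K[X] :=
  ∏ l ∈ Finset.univ.erase k, (X - C (z l)) ^ μ l

noncomputable def partialFractionFamily (b : Σ k, Fin (μ k)) : K[X] :=
  (X - C (z b.1)) ^ (b.2 : ℕ) * cofactor z μ b.1

variable {z μ}

theorem X_sub_C_pow_dvd_cofactor {k l : ι} (hkl : k ≠ l) :
    (X - C (z k)) ^ μ k ∣ cofactor z μ l :=
  Finset.dvd_prod_of_mem _ (Finset.mem_erase.2 ⟨hkl, Finset.mem_univ k⟩)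

theorem isCoprime_X_sub_C_pow_cofactor (hz : Function.Injective z) (k : ι) :
    IsCoprime ((X - C (z k)) ^ μ k) (cofactor z μ k) :=
  IsCoprime.prod_right fun _ hl =>
    ((pairwise_coprime_X_sub_C hz (Finset.ne_of_mem_erase hl).symm).pow)

theorem X_sub_C_pow_dvd_of_sum_mul_cofactor_eq_zero (hz : Function.Injective z) {p : ι → K[X]}
    (hp : ∑ l, p l * cofactor z μ l = 0) (k : ι) : (X - C (z k)) ^ μ k ∣ p k := by
  refine (isCoprime_X_sub_C_pow_cofactor hz k).dvd_of_dvd_mul_right ?_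
  have hsplit := Finset.add_sum_erase Finset.univ (fun l => p l * cofactor z μ l)
    (Finset.mem_univ k)
  rw [hp, add_eq_zero_iff_eq_neg] at hsplit
  rw [hsplit, dvd_neg]
  exact Finset.dvd_sum fun l hl =>
    (X_sub_C_pow_dvd_cofactor (Finset.ne_of_mem_erase hl).symm).mul_left _

theorem eq_zero_of_X_sub_C_pow_dvd_sum {r : K} {n : ℕ} {g : Fin n → K}
    (hdvd : (X - C r) ^ n ∣ ∑ j : Fin n, C (g j) * (X - C r) ^ (j : ℕ)) : g = 0 := by
  have htaylor : taylor r (∑ j : Fin n, C (g j) * (X - C r) ^ (j : ℕ)) =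
      ∑ j : Fin n, C (g j) * X ^ (j : ℕ) := by
    simp
  have hdeg : (∑ j : Fin n, C (g j) * X ^ (j : ℕ)) ∈ degreeLT K n :=
    Submodule.sum_mem _ fun j _ => mem_degreeLT.2 <|
      (degree_C_mul_X_pow_le _ _).trans_lt (WithBot.coe_lt_coe.2 j.isLt)
  rw [← htaylor, taylor_mem_degreeLT, mem_degreeLT] at hdeg
  have hzero := eq_zero_of_dvd_of_degree_lt hdvd (by simpa using hdeg)
  ext j
  simpa [hzero, finsetSum_coeff, coeff_C_mul, coeff_X_pow, Fin.val_eq_val] using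
    (congrArg (coeff · j) htaylor).symm

theorem linearIndependent_partialFractionFamily (hz : Function.Injective z) :
    LinearIndependent K (partialFractionFamily z μ) := by
  rw [Fintype.linearIndependent_iff]
  intro g hg ⟨k, j⟩
  have hblocks : ∑ l, (∑ i : Fin (μ l), C (g ⟨l, i⟩) * (X - C (z l)) ^ (i : ℕ)) *
      cofactor z μ l = 0 := by
    rw [← hg, ← Finset.univ_sigma_univ, Finset.sum_sigma]
    simp only [Finset.sum_mul, partialFractionFamily, smul_eq_C_mul, mul_assoc]
  exact congrFun (eq_zero_of_X_sub_C_pow_dvd_sum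
    (X_sub_C_pow_dvd_of_sum_mul_cofactor_eq_zero hz hblocks k)) j

theorem partialFractionFamily_mem_degreeLT (b : Σ k, Fin (μ k)) :
    partialFractionFamily z μ b ∈ degreeLT K (∑ k, μ k) := by
  obtain ⟨k, j⟩ := b
  have hdeg : (partialFractionFamily z μ ⟨k, j⟩).natDegree ≤
      j + ∑ l ∈ Finset.univ.erase k, μ l :=
    natDegree_mul_le.trans <| add_le_add (by simp) <|
      (natDegree_prod_le _ _).trans <| Finset.sum_le_sum fun l _ => by simp
  have hlt : j + ∑ l ∈ Finset.univ.erase k, μ l < ∑ l, μ l := by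
    rw [← Finset.add_sum_erase _ _ (Finset.mem_univ k)]
    omega
  rw [mem_degreeLT]
  exact degree_le_natDegree.trans_lt (by exact_mod_cast hdeg.trans_lt hlt)

theorem span_partialFractionFamily (hz : Function.Injective z) :
    Submodule.span K (Set.range (partialFractionFamily z μ)) = degreeLT K (∑ k, μ k) := by
  refine Submodule.eq_of_le_of_finrank_eq
    (Submodule.span_le.2 (Set.range_subset_iff.2 partialFractionFamily_mem_degreeLT)) ?_
  rw [finrank_span_eq_card (linearIndependent_partialFractionFamily hz),
    Module.finrank_eq_card_basis (degreeLT.basis K _)]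
  simp

end PartialFractions

end Polynomial

noncomputable def polyActLinear (ν : ℕ) (w : Fin ν → ℂ) : ℂ[X] →ₗ[ℂ] ℂ :=
  ∑ i : Fin ν, w i • lcoeff ℂ i

theorem polyActLinear_apply (ν : ℕ) (w : Fin ν → ℂ) (R : ℂ[X]) :
    polyActLinear ν w R = polyActV ν R w := by
  simp [polyActLinear, polyActV, mul_comm]

theorem polyActV_C_mul (ν : ℕ) (w : Fin ν → ℂ) (c : ℂ) (R : ℂ[X]) :
    polyActV ν (C c * R) w = c * polyActV ν R w := by
  rw [← polyActLinear_apply, ← smul_eq_C_mul, map_smul, polyActLinear_apply, smul_eq_mul]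

theorem polyActV_X_pow (ν : ℕ) (w : Fin ν → ℂ) (i : Fin ν) :
    polyActV ν (X ^ (i : ℕ)) w = w i := by
  simp [polyActV, coeff_X_pow, Fin.val_eq_val]

theorem exists_polyActV_partialFractionFamily_ne_zero {ν m : ℕ} {z : Fin m → ℂ}
    (hz : Function.Injective z) {μ : Fin m → ℕ} (hsum : ∑ k, μ k = ν) {w : Fin ν → ℂ}
    (hw : w ≠ 0) : ∃ b, polyActV ν (partialFractionFamily z μ b) w ≠ 0 := by
  by_contra! h
  refine hw (funext fun i => ?_)
  have hspan : Submodule.span ℂ (Set.range (partialFractionFamily z μ)) ≤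
      LinearMap.ker (polyActLinear ν w) :=
    Submodule.span_le.2 <| Set.range_subset_iff.2 fun b => by
      simp [polyActLinear_apply, h b]
  have hXi : (X ^ (i : ℕ) : ℂ[X]) ∈
      Submodule.span ℂ (Set.range (partialFractionFamily z μ)) := by
    rw [span_partialFractionFamily hz, hsum, mem_degreeLT]
    exact (degree_X_pow_le _).trans_lt (WithBot.coe_lt_coe.2 i.isLt)
  simpa [polyActLinear_apply, polyActV_X_pow] using hspan hXi

theorem stmt_2_general (ν m : ℕ) (a : ℂ) (ha : a ≠ 0)
    (z : Fin m → ℂ) (hz : Function.Injective z)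
    (μ : Fin m → ℕ) (hsum : ∑ k : Fin m, μ k = ν)
    (hzmult : ∀ k, 2 ≤ μ k → ‖z k‖ < 1)
    (ε : ℝ) (hε : 0 < ε) :
    ∀ w : Fin ν → ℂ, w ≠ 0 →
      0 < ∑ k : Fin m, (μ k : ℝ) * ‖polyActV ν (Pkpoly m a z μ k) w‖ ^ 2
          + ∑ k : Fin m, ∑ j ∈ Finset.Icc 1 (μ k - 1),
              ε ^ (μ k - j) * (1 - ‖z k‖ ^ 2) ^ (2 * (μ k - j))
                * ‖polyActV ν (Qkjpoly m a z μ k j) w‖ ^ 2 := by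
  intro w hw
  obtain ⟨⟨k, j⟩, hj⟩ := exists_polyActV_partialFractionFamily_ne_zero hz hsum hw
  have hpos : 0 < ‖polyActV ν (C a * partialFractionFamily z μ ⟨k, j⟩) w‖ ^ 2 := by
    rw [polyActV_C_mul]
    exact pow_pos (norm_pos_iff.2 (mul_ne_zero ha hj)) 2
  have hP : ∀ k, 0 ≤ (μ k : ℝ) * ‖polyActV ν (Pkpoly m a z μ k) w‖ ^ 2 :=
    fun _ => mul_nonneg (Nat.cast_nonneg _) (sq_nonneg _)
  have hQ : ∀ k, ∀ i ∈ Finset.Icc 1 (μ k - 1),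
      0 ≤ ε ^ (μ k - i) * (1 - ‖z k‖ ^ 2) ^ (2 * (μ k - i))
        * ‖polyActV ν (Qkjpoly m a z μ k i) w‖ ^ 2 := fun _ _ _ =>
    mul_nonneg (mul_nonneg (pow_nonneg hε.le _) (by rw [pow_mul]; positivity)) (sq_nonneg _)
  rcases eq_or_lt_of_le (Nat.le_sub_one_of_lt j.isLt) with hj' | hj'
  · refine add_pos_of_pos_of_nonneg
      (Finset.sum_pos' (fun k _ => hP k) ⟨k, Finset.mem_univ k, ?_⟩)
      (Finset.sum_nonneg fun k _ => Finset.sum_nonneg (hQ k))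
    rw [Pkpoly, mul_assoc (C a), ← hj']
    exact mul_pos (Nat.cast_pos.2 j.pos) hpos
  · have hzk : 0 < 1 - ‖z k‖ ^ 2 :=
      sub_pos.2 (pow_lt_one₀ (norm_nonneg _) (hzmult k (by omega)) two_ne_zero)
    refine add_pos_of_nonneg_of_pos (Finset.sum_nonneg fun k _ => hP k)
      (Finset.sum_pos' (fun k _ => Finset.sum_nonneg (hQ k)) ⟨k, Finset.mem_univ k,
        Finset.sum_pos' (hQ k) ⟨j + 1, Finset.mem_Icc.2 ⟨by omega, by omega⟩, ?_⟩⟩)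
    rw [Qkjpoly, mul_assoc (C a), Nat.add_sub_cancel]
    exact mul_pos (mul_pos (pow_pos hε _) (pow_pos hzk _)) hpos

/-- positive definiteness of the energy form
`q_e(w) = Σ_k μ_k |P_k(T)w⁰|² + Σ_k Σ_{j=1}^{μ_k−1} ε^{μ_k−j} (1−|z_k|²)^{2(μ_k−j)} |Q_{k,j}(T)w⁰|²`. -/
theorem stmt_2 (ν m : ℕ) (hν : 1 ≤ ν) (a : ℂ) (ha : a ≠ 0)
    (z : Fin m → ℂ) (hz : Function.Injective z)
    (μ : Fin m → ℕ) (hμ : ∀ k, 1 ≤ μ k) (hsum : ∑ k : Fin m, μ k = ν)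
    (hzmult : ∀ k, 2 ≤ μ k → ‖z k‖ < 1)
    (ε : ℝ) (hε : 0 < ε) :
    ∀ w : Fin ν → ℂ, w ≠ 0 →
      0 < ∑ k : Fin m, (μ k : ℝ) * ‖polyActV ν (Pkpoly m a z μ k) w‖ ^ 2
          + ∑ k : Fin m, ∑ j ∈ Finset.Icc 1 (μ k - 1),
              ε ^ (μ k - j) * (1 - ‖z k‖ ^ 2) ^ (2 * (μ k - j))
                * ‖polyActV ν (Qkjpoly m a z μ k j) w‖ ^ 2 :=
  stmt_2_general ν m a ha z hz μ hsum hzmult ε hε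
end

section
/- Let P ∈ ℂ[X] be a nonconstant polynomial such that every root of P has modulus at most 1 and every root of P of modulus exactly 1 is a simple root of P. Then every root of the derivative P' has modulus strictly less than 1. -/
/-!
By the Gauss–Lucas theorem every root of `P'` lies in the convex hull of the roots of `P`, hence
in the closed unit disc. A point of the unit circle is an extreme point of the disc, so it can only
lie in that convex hull if it is itself a root of `P`; a root of `P'` of modulus one would thus be
a multiple root of `P`.
-/

open Metric Polynomial

theorem mem_of_mem_convexHull_of_mem_sphere {E : Type*} [NormedAddCommGroup E] [NormedSpace ℝ E]
    [StrictConvexSpace ℝ E] {A : Set E} {c z : E} {r : ℝ} (hr : r ≠ 0)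
    (hA : A ⊆ closedBall c r) (hz : z ∈ convexHull ℝ A) (hzr : z ∈ sphere c r) : z ∈ A := by
  have hball : convexHull ℝ A ⊆ closedBall c r := convexHull_min hA (convex_closedBall c r)
  have hext : z ∈ (closedBall c r).extremePoints ℝ :=
    StrictConvexSpace.sphere_subset_extremePoints_closedBall c hr hzr
  exact extremePoints_convexHull_subset <|
    inter_extremePoints_subset_extremePoints_of_subset hball ⟨hz, hext⟩

/-- if `P` is a nonconstant polynomial whose roots all have modulus at
most 1, the ones of modulus exactly 1 being simple, then all roots of `P'` have
modulus strictly less than 1. -/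
theorem stmt_5 (P : Polynomial ℂ) (hP : 0 < P.natDegree)
    (hroots : ∀ z : ℂ, P.eval z = 0 → ‖z‖ ≤ 1)
    (hsimple : ∀ z : ℂ, P.eval z = 0 → ‖z‖ = 1 → P.derivative.eval z ≠ 0) :
    ∀ z : ℂ, P.derivative.eval z = 0 → ‖z‖ < 1 := by
  intro z hz
  have hrootSet : P.rootSet ℂ ⊆ closedBall 0 1 := fun w hw => by
    rw [mem_rootSet, coe_aeval_eq_eval] at hw
    simpa using hroots w hw.2
  have hhull : z ∈ convexHull ℝ (P.rootSet ℂ) :=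
    rootSet_derivative_subset_convexHull_rootSet (natDegree_pos_iff_degree_pos.mp hP)
      (by rw [mem_rootSet, coe_aeval_eq_eval]; exact ⟨derivative_ne_zero.mpr hP.ne', hz⟩)
  have hdisc : ‖z‖ ≤ 1 :=
    mem_closedBall_zero_iff.mp (convexHull_min hrootSet (convex_closedBall 0 1) hhull)
  refine hdisc.lt_of_ne fun hz1 => hsimple z ?_ hz1 hz
  have hzroot := mem_of_mem_convexHull_of_mem_sphere one_ne_zero hrootSet hhull (by simpa using hz1)
  rw [mem_rootSet, coe_aeval_eq_eval] at hzroot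
  exact hzroot.2
end

section
/- Let a, b, c ∈ ℂ with a ≠ 0. Define Hermitian forms on ℂ² by q_e(x₁,x₂) := 2|a|²|x₂|² + 2·Re( conj(a·x₂)·b·x₁ ) + (|a|²+|c|²)·|x₁|² and q_d(x₁,x₂) := (|a|²−|c|²)·|x₂|² + 2·Re( conj(a·x₂)·b·x₁ ) − 2·Re( conj(b·x₂)·c·x₁ ) + (|a|²−|c|²)·|x₁|². Then for every sequence v : ℕ → ℂ and every n ∈ ℕ, 2·Re( conj(2a·v(n+2) + b·v(n+1)) · (a·v(n+2) + b·v(n+1) + c·v(n)) ) = 2·|a·v(n+2) + b·v(n+1) + c·v(n)|² + q_e(v(n+1),v(n+2)) − q_e(v(n),v(n+1)) + q_d(v(n),v(n+1)). -/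
/-- The energy form for the degree-2 polynomial `P = aX² + bX + c`. -/
noncomputable def qe (a b c x₁ x₂ : ℂ) : ℝ :=
  2 * ‖a‖ ^ 2 * ‖x₂‖ ^ 2
    + 2 * ((starRingEnd ℂ) (a * x₂) * (b * x₁)).re
    + (‖a‖ ^ 2 + ‖c‖ ^ 2) * ‖x₁‖ ^ 2

/-- The dissipation form for the degree-2 polynomial `P = aX² + bX + c`. -/
noncomputable def qd (a b c x₁ x₂ : ℂ) : ℝ :=
  (‖a‖ ^ 2 - ‖c‖ ^ 2) * ‖x₂‖ ^ 2
    + 2 * ((starRingEnd ℂ) (a * x₂) * (b * x₁)).re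
    - 2 * ((starRingEnd ℂ) (b * x₂) * (c * x₁)).re
    + (‖a‖ ^ 2 - ‖c‖ ^ 2) * ‖x₁‖ ^ 2

/-!
Write `x, y, z` for `v n, v (n+1), v (n+2)` and `p = az + by + cx` for `P(T)v(n)`.
Then `T P'(T)v(n) = 2az + by = p + (az - cx)`, so the left side is
`2|p|² + 2 Re(conj(az - cx) · p)`, and the second term is exactly the energy increment
`qe(y,z) - qe(x,y)` plus the dissipation `qd(x,y)`: the cross terms `Re(conj(ay) · bx)`
cancel between `qe` and `qd`, and `Re(conj(az) · cx) = Re(conj(cx) · az)`.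
-/

open ComplexConjugate

lemma Complex.re_conj_add_mul_self (p d : ℂ) :
    (conj (p + d) * p).re = ‖p‖ ^ 2 + (conj d * p).re := by
  rw [map_add, add_mul, Complex.add_re, mul_comm (conj p), Complex.mul_conj',
    ← Complex.ofReal_pow, Complex.ofReal_re]

lemma qe_sub_qe_add_qd (a b c x y z : ℂ) :
    qe a b c y z - qe a b c x y + qd a b c x y
      = 2 * (conj (a * z - c * x) * (a * z + b * y + c * x)).re := by
  simp only [qe, qd, Complex.sq_norm, Complex.normSq_apply, Complex.mul_re, Complex.mul_im,
    Complex.add_re, Complex.add_im, Complex.sub_re, Complex.sub_im, Complex.conj_re,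
    Complex.conj_im, map_sub, map_mul]
  ring

theorem stmt_8_general (a b c : ℂ) (v : ℕ → ℂ) (n : ℕ) :
    2 * ((starRingEnd ℂ) (2 * a * v (n + 2) + b * v (n + 1))
          * (a * v (n + 2) + b * v (n + 1) + c * v n)).re
    = 2 * ‖a * v (n + 2) + b * v (n + 1) + c * v n‖ ^ 2
      + qe a b c (v (n + 1)) (v (n + 2)) - qe a b c (v n) (v (n + 1))
      + qd a b c (v n) (v (n + 1)) := by
  have hderiv : 2 * a * v (n + 2) + b * v (n + 1)
      = (a * v (n + 2) + b * v (n + 1) + c * v n) + (a * v (n + 2) - c * v n) := by ring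
  rw [hderiv, Complex.re_conj_add_mul_self, mul_add, ← qe_sub_qe_add_qd]
  ring

/-- the energy-dissipation balance law for second order recurrence
relations, `2 Re( conj(T P'(T)v(n)) · P(T)v(n) ) = 2|P(T)v(n)|² + qe(v(n+1),v(n+2))
− qe(v(n),v(n+1)) + qd(v(n),v(n+1))`. -/
theorem stmt_8 (a b c : ℂ) (ha : a ≠ 0) (v : ℕ → ℂ) (n : ℕ) :
    2 * ((starRingEnd ℂ) (2 * a * v (n + 2) + b * v (n + 1))
          * (a * v (n + 2) + b * v (n + 1) + c * v n)).re
    = 2 * ‖a * v (n + 2) + b * v (n + 1) + c * v n‖ ^ 2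
      + qe a b c (v (n + 1)) (v (n + 2)) - qe a b c (v n) (v (n + 1))
      + qd a b c (v n) (v (n + 1)) :=
  stmt_8_general a b c v n
end

section
/- Let a, b, c ∈ ℂ with a ≠ 0, and suppose the two roots z₁, z₂ (with multiplicity) of P = aX² + bX + c satisfy |z₁| ≤ 1 and |z₂| ≤ 1, and if z₁ = z₂ then |z₁| < 1. Then the Hermitian form q_e on ℂ² defined by q_e(x₁,x₂) := 2|a|²|x₂|² + 2·Re( conj(a·x₂)·b·x₁ ) + (|a|²+|c|²)·|x₁|² is positive definite. -/
/-!
Writing `b = -a (z₁ + z₂)` and `c = a z₁ z₂`, the form splits as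
`q_e(x) = |a|² (|x₂ - z₁x₁|² + |x₂ - z₂x₁|² + (1 - |z₁|²)(1 - |z₂|²)|x₁|²)`,
a sum of three nonnegative terms. They vanish simultaneously only if `x₂ = z₁x₁ = z₂x₁`, which
forces `x₁ = 0` (hence `x = 0`) when `z₁ ≠ z₂`, while for a double root the last term is positive
as soon as `x₁ ≠ 0`.
-/

theorem energyForm_eq_root_decomposition (a z₁ z₂ x₁ x₂ : ℂ) :
    2 * ‖a‖ ^ 2 * ‖x₂‖ ^ 2 + 2 * ((starRingEnd ℂ) (a * x₂) * (-(a * (z₁ + z₂)) * x₁)).re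
        + (‖a‖ ^ 2 + ‖a * z₁ * z₂‖ ^ 2) * ‖x₁‖ ^ 2
      = ‖a‖ ^ 2 * (‖x₂ - z₁ * x₁‖ ^ 2 + ‖x₂ - z₂ * x₁‖ ^ 2
          + (1 - ‖z₁‖ ^ 2) * (1 - ‖z₂‖ ^ 2) * ‖x₁‖ ^ 2) := by
  simp only [Complex.sq_norm, Complex.normSq_apply, Complex.mul_re, Complex.mul_im,
    Complex.neg_re, Complex.neg_im, Complex.add_re, Complex.add_im, Complex.sub_re,
    Complex.sub_im, Complex.conj_re, Complex.conj_im]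
  ring

theorem root_decomposition_pos {z₁ z₂ x₁ x₂ : ℂ} (hz₁ : ‖z₁‖ ≤ 1) (hz₂ : ‖z₂‖ ≤ 1)
    (hdouble : z₁ = z₂ → ‖z₁‖ < 1) (hx : ¬(x₁ = 0 ∧ x₂ = 0)) :
    0 < ‖x₂ - z₁ * x₁‖ ^ 2 + ‖x₂ - z₂ * x₁‖ ^ 2
      + (1 - ‖z₁‖ ^ 2) * (1 - ‖z₂‖ ^ 2) * ‖x₁‖ ^ 2 := by
  have hdisk₁ : 0 ≤ 1 - ‖z₁‖ ^ 2 := sub_nonneg.2 (pow_le_one₀ (norm_nonneg _) hz₁)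
  have hdisk₂ : 0 ≤ 1 - ‖z₂‖ ^ 2 := sub_nonneg.2 (pow_le_one₀ (norm_nonneg _) hz₂)
  rcases eq_or_ne x₁ 0 with rfl | hx₁
  · have hx₂ : x₂ ≠ 0 := fun h ↦ hx ⟨rfl, h⟩
    simp only [mul_zero, sub_zero, norm_zero]
    positivity
  rcases eq_or_ne z₁ z₂ with rfl | hz
  · have hint : 0 < 1 - ‖z₁‖ ^ 2 := sub_pos.2 (pow_lt_one₀ (norm_nonneg _) (hdouble rfl) two_ne_zero)
    positivity
  · have hne : x₂ - z₁ * x₁ ≠ x₂ - z₂ * x₁ := by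
      rwa [Ne, sub_right_inj, mul_left_inj' hx₁]
    have hsum : 0 < ‖x₂ - z₁ * x₁‖ ^ 2 + ‖x₂ - z₂ * x₁‖ ^ 2 := by
      have : x₂ - z₁ * x₁ ≠ 0 ∨ x₂ - z₂ * x₁ ≠ 0 := by
        by_contra! h
        exact hne (h.1.trans h.2.symm)
      rcases this with h | h <;> positivity
    positivity

/-- positive definiteness of the energy form `q_e` for a degree-2
polynomial `P = aX² + bX + c` whose roots `z₁, z₂` lie in the closed unit disk,
the double-root case being allowed only in the open disk. -/
theorem stmt_9 (a b c z₁ z₂ : ℂ) (ha : a ≠ 0)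
    (hb : a * (z₁ + z₂) = -b) (hc : a * z₁ * z₂ = c)
    (hz₁ : ‖z₁‖ ≤ 1) (hz₂ : ‖z₂‖ ≤ 1)
    (hdouble : z₁ = z₂ → ‖z₁‖ < 1) :
    ∀ x₁ x₂ : ℂ, ¬(x₁ = 0 ∧ x₂ = 0) →
      0 < 2 * ‖a‖ ^ 2 * ‖x₂‖ ^ 2
            + 2 * ((starRingEnd ℂ) (a * x₂) * (b * x₁)).re
            + (‖a‖ ^ 2 + ‖c‖ ^ 2) * ‖x₁‖ ^ 2 := by
  intro x₁ x₂ hx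
  obtain rfl : b = -(a * (z₁ + z₂)) := by linear_combination hb
  subst hc
  rw [energyForm_eq_root_decomposition]
  exact mul_pos (by positivity) (root_decomposition_pos hz₁ hz₂ hdouble hx)
end

section
/- Let a, b, c ∈ ℂ with a ≠ 0, and suppose the two roots z₁, z₂ (with multiplicity) of P = aX² + bX + c satisfy |z₁| ≤ 1 and |z₂| ≤ 1. Then the Hermitian form q_d on ℂ² defined by q_d(x₁,x₂) := (|a|²−|c|²)·|x₂|² + 2·Re( conj(a·x₂)·b·x₁ ) − 2·Re( conj(b·x₂)·c·x₁ ) + (|a|²−|c|²)·|x₁|² is nonnegative. -/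
/-!
Substituting `b = -a (z₁ + z₂)` and `c = a z₁ z₂`, twice the form becomes the sum of squares
`|a|² Σ (1 - |zᵢ|²) (|zⱼ x₁ - x₂|² + |x₁ - z̄ⱼ x₂|²)` over `{i, j} = {1, 2}`,
each term of which is nonnegative when both roots lie in the closed unit disk.
-/

open ComplexConjugate

namespace Complex

noncomputable def rootSquareTerm (z w x₁ x₂ : ℂ) : ℝ :=
  (1 - ‖z‖ ^ 2) * (‖w * x₁ - x₂‖ ^ 2 + ‖x₁ - conj w * x₂‖ ^ 2)

theorem rootSquareTerm_nonneg {z : ℂ} (hz : ‖z‖ ≤ 1) (w x₁ x₂ : ℂ) :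
    0 ≤ rootSquareTerm z w x₁ x₂ :=
  mul_nonneg (sub_nonneg.2 (pow_le_one₀ (norm_nonneg z) hz))
    (add_nonneg (sq_nonneg _) (sq_nonneg _))

theorem two_mul_dissipation_eq_sum_rootSquareTerm (a z₁ z₂ x₁ x₂ : ℂ) :
    2 * ((‖a‖ ^ 2 - ‖a * z₁ * z₂‖ ^ 2) * ‖x₂‖ ^ 2
        + 2 * (conj (a * x₂) * (-(a * (z₁ + z₂)) * x₁)).re
        - 2 * (conj (-(a * (z₁ + z₂)) * x₂) * (a * z₁ * z₂ * x₁)).re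
        + (‖a‖ ^ 2 - ‖a * z₁ * z₂‖ ^ 2) * ‖x₁‖ ^ 2)
      = ‖a‖ ^ 2 * (rootSquareTerm z₁ z₂ x₁ x₂ + rootSquareTerm z₂ z₁ x₁ x₂) := by
  simp only [rootSquareTerm, Complex.sq_norm, normSq_apply, mul_re, mul_im, sub_re, sub_im, add_re,
    add_im, neg_re, neg_im, conj_re, conj_im]
  ring

end Complex

theorem stmt_10_general (a b c z₁ z₂ : ℂ)
    (hb : a * (z₁ + z₂) = -b) (hc : a * z₁ * z₂ = c)
    (hz₁ : ‖z₁‖ ≤ 1) (hz₂ : ‖z₂‖ ≤ 1) :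
    ∀ x₁ x₂ : ℂ,
      0 ≤ (‖a‖ ^ 2 - ‖c‖ ^ 2) * ‖x₂‖ ^ 2
            + 2 * ((starRingEnd ℂ) (a * x₂) * (b * x₁)).re
            - 2 * ((starRingEnd ℂ) (b * x₂) * (c * x₁)).re
            + (‖a‖ ^ 2 - ‖c‖ ^ 2) * ‖x₁‖ ^ 2 := by
  intro x₁ x₂
  obtain rfl : b = -(a * (z₁ + z₂)) := by rw [hb, neg_neg]
  subst hc
  have hsum := Complex.two_mul_dissipation_eq_sum_rootSquareTerm a z₁ z₂ x₁ x₂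
  have hterms : 0 ≤ ‖a‖ ^ 2 * (Complex.rootSquareTerm z₁ z₂ x₁ x₂
      + Complex.rootSquareTerm z₂ z₁ x₁ x₂) :=
    mul_nonneg (sq_nonneg _) (add_nonneg (Complex.rootSquareTerm_nonneg hz₁ _ _ _)
      (Complex.rootSquareTerm_nonneg hz₂ _ _ _))
  linarith

/-- nonnegativity of the dissipation form `q_d` for a degree-2
polynomial `P = aX² + bX + c` whose roots `z₁, z₂` lie in the closed unit disk. -/
theorem stmt_10 (a b c z₁ z₂ : ℂ) (ha : a ≠ 0)
    (hb : a * (z₁ + z₂) = -b) (hc : a * z₁ * z₂ = c)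
    (hz₁ : ‖z₁‖ ≤ 1) (hz₂ : ‖z₂‖ ≤ 1) :
    ∀ x₁ x₂ : ℂ,
      0 ≤ (‖a‖ ^ 2 - ‖c‖ ^ 2) * ‖x₂‖ ^ 2
            + 2 * ((starRingEnd ℂ) (a * x₂) * (b * x₁)).re
            - 2 * ((starRingEnd ℂ) (b * x₂) * (c * x₁)).re
            + (‖a‖ ^ 2 - ‖c‖ ^ 2) * ‖x₁‖ ^ 2 :=
  stmt_10_general a b c z₁ z₂ hb hc hz₁ hz₂
end

section
/- Let a, z₁, z₂, x₁, x₂ ∈ ℂ and set b := −a·(z₁+z₂) and c := a·z₁·z₂. Then (|a|²−|c|²)·|x₂|² + 2·Re( conj(a·x₂)·b·x₁ ) − 2·Re( conj(b·x₂)·c·x₁ ) + (|a|²−|c|²)·|x₁|² = |a|²·(1−|z₁|²)·|x₂ − z₂·x₁|² + |a|²·(1−|z₂|²)·|x₂ − z₁·x₁|² + |a|²·(1−|z₁|²)·(1−|z₂|²)·( |x₁|² − |x₂|² ). -/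
/-- identity expressing the dissipation form `q_d` in terms of the roots. -/
theorem stmt_12 (a z₁ z₂ x₁ x₂ : ℂ) (b c : ℂ)
    (hb : b = -a * (z₁ + z₂)) (hc : c = a * z₁ * z₂) :
    (‖a‖ ^ 2 - ‖c‖ ^ 2) * ‖x₂‖ ^ 2
      + 2 * ((starRingEnd ℂ) (a * x₂) * (b * x₁)).re
      - 2 * ((starRingEnd ℂ) (b * x₂) * (c * x₁)).re
      + (‖a‖ ^ 2 - ‖c‖ ^ 2) * ‖x₁‖ ^ 2
    = ‖a‖ ^ 2 * (1 - ‖z₁‖ ^ 2) * ‖x₂ - z₂ * x₁‖ ^ 2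
      + ‖a‖ ^ 2 * (1 - ‖z₂‖ ^ 2) * ‖x₂ - z₁ * x₁‖ ^ 2
      + ‖a‖ ^ 2 * (1 - ‖z₁‖ ^ 2) * (1 - ‖z₂‖ ^ 2)
          * (‖x₁‖ ^ 2 - ‖x₂‖ ^ 2) := by
  subst hb hc
  apply Complex.ofReal_injective
  push_cast
  simp only [Complex.re_eq_add_conj, ← Complex.mul_conj', map_mul, map_sub, map_neg, map_add,
    Complex.conj_conj]
  ring
end
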